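/- arXiv:1405.6607 — 5 statements merged into one kernel-verified Lean document; each statement's English description precedes it below -/
import Mathlib

section
/- Let n ≥ 2, let H be holomorphic on an open set U ⊆ ℂ^{n−1}, and let F be in standard form with non-cubic part H. Let A, B ∈ SL(2,ℂ). The function F^A is again in standard form (its non-cubic part being the sum of the Q-term (c_A/(8(c_Atⁿ+d_A)))(∑_{k=2}^{n−1}t^k t^{n+1−k})² and the transformed H-term), so (F^A)^B is defined. Then (F^A)^B = F^{AB}, where AB denotes the matrix product, at every point t ∈ ℂⁿ such that c_B tⁿ + d_B ≠ 0, c_{AB} tⁿ + d_{AB} ≠ 0, and (t²/(c_{AB}tⁿ+d_{AB}),…,t^{n−1}/(c_{AB}tⁿ+d_{AB}),(a_{AB}tⁿ+b_{AB})/(c_{AB}tⁿ+d_{AB})) ∈ U. In particular the assignment F ↦ F^A defines an action of SL(2,ℂ). -/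
open Finset

/-!
`F^A` rescales the middle variables by the automorphy factor `j(A, x) = c x + d` of `x = tⁿ`
and moves `tⁿ` by the Möbius transformation of `A`. The H-terms compose because of the cocycle
relation `j(AB, x) = j(A, B·x) j(B, x)` and `A·(B·x) = (AB)·x`. The quadratic sum is homogeneous of
degree 2, so the Q-terms compose because `c_{AB}/j(AB,x) = c_B/j(B,x) + c_A/(j(A,B·x) j(B,x)²)`,
an identity that holds since `det B = 1`.
-/

/-- The last coordinate index (1-based `n`). -/
def lastIdx (n : ℕ) (hn : 2 ≤ n) : Fin n := ⟨n - 1, by omega⟩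

/-- The projection `t = (t¹,…,tⁿ) ↦ (t²,…,tⁿ)`. -/
def tailArg {n : ℕ} (t : Fin n → ℂ) : Fin (n - 1) → ℂ :=
  fun j => t ⟨(j : ℕ) + 1, by have := j.isLt; omega⟩

/-- The quadratic sum `∑_{i=2}^{n-1} tⁱ t^{n+1-i}` (1-based indexing). -/
noncomputable def midSum (n : ℕ) (hn : 2 ≤ n) (t : Fin n → ℂ) : ℂ :=
  ∑ i : Fin n, if 1 ≤ (i : ℕ) ∧ (i : ℕ) ≤ n - 2 then t i * t ⟨n - 1 - (i : ℕ), by omega⟩ else 0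

/-- A potential in standard form: `F(t) = ½(t¹)²tⁿ + ½t¹ ∑_{i=2}^{n-1} tⁱt^{n+1-i} + G(t²,…,tⁿ)`. -/
noncomputable def stdForm (n : ℕ) (hn : 2 ≤ n) (G : (Fin (n - 1) → ℂ) → ℂ) :
    (Fin n → ℂ) → ℂ :=
  fun t => 1 / 2 * (t ⟨0, by omega⟩) ^ 2 * t (lastIdx n hn)
    + 1 / 2 * t ⟨0, by omega⟩ * midSum n hn t
    + G (tailArg t)

/-- The `SL(2,ℂ)`-transform of the non-cubic part: if `F` is in standard form with non-cubic
part `H(t²,…,tⁿ)`, then `F^A` is in standard form with non-cubic part `slH a b c d H`,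
consisting of the Q-term `(c/(8(ctⁿ+d)))(∑_{k=2}^{n-1} tᵏt^{n+1-k})²` and the transformed
H-term `(ctⁿ+d)² H(t²/(ctⁿ+d),…,t^{n-1}/(ctⁿ+d),(atⁿ+b)/(ctⁿ+d))`.
Here `s : Fin (n-1) → ℂ` stands for the variables `(t²,…,tⁿ)`. -/
noncomputable def slH (n : ℕ) (hn : 2 ≤ n) (a b c d : ℂ)
    (H : (Fin (n - 1) → ℂ) → ℂ) : (Fin (n - 1) → ℂ) → ℂ :=
  fun s =>
    c / (8 * (c * s ⟨n - 2, by omega⟩ + d)) *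
      (∑ j : Fin (n - 1),
        if (j : ℕ) + 2 ≤ n - 1 then s j * s ⟨n - 3 - (j : ℕ), by omega⟩ else 0) ^ 2
    + (c * s ⟨n - 2, by omega⟩ + d) ^ 2 *
      H (fun j => if (j : ℕ) + 2 = n
          then (a * s ⟨n - 2, by omega⟩ + b) / (c * s ⟨n - 2, by omega⟩ + d)
          else s j / (c * s ⟨n - 2, by omega⟩ + d))

section Mobius

variable {K : Type*} [Field K]

def mobius (a b c d x : K) : K := (a * x + b) / (c * x + d)

theorem denom_mobius (c d a' b' c' d' x : K) (h : c' * x + d' ≠ 0) :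
    c * mobius a' b' c' d' x + d
      = ((c * a' + d * c') * x + (c * b' + d * d')) / (c' * x + d') := by
  rw [mobius, mul_div_assoc', div_add' _ _ _ h]
  ring

theorem mobius_mobius (aA bA cA dA aB bB cB dB x : K) (hB : cB * x + dB ≠ 0) :
    mobius aA bA cA dA (mobius aB bB cB dB x)
      = mobius (aA * aB + bA * cB) (aA * bB + bA * dB)
          (cA * aB + dA * cB) (cA * bB + dA * dB) x := by
  rw [mobius, denom_mobius aA bA aB bB cB dB x hB, denom_mobius cA dA aB bB cB dB x hB,
    div_div_div_cancel_right₀ hB]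
  rfl

/-- The coefficients `c / (c x + d)` of the Q-terms compose like a cocycle. -/
theorem lowerLeft_div_denom_cocycle (cA dA aB bB cB dB x : K)
    (hB : aB * dB - bB * cB = 1) (h₁ : cB * x + dB ≠ 0)
    (h₂ : (cA * aB + dA * cB) * x + (cA * bB + dA * dB) ≠ 0) :
    cB / (cB * x + dB) + cA / (cA * mobius aB bB cB dB x + dA) / (cB * x + dB) ^ 2
      = (cA * aB + dA * cB) / ((cA * aB + dA * cB) * x + (cA * bB + dA * dB)) := by
  rw [denom_mobius cA dA aB bB cB dB x h₁]
  generalize hN : (cA * aB + dA * cB) * x + (cA * bB + dA * dB) = N at h₂ ⊢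
  field_simp
  linear_combination (-cA) * hB - cB * hN

end Mobius

section Tail

variable {K : Type*} [Field K] {n : ℕ} (hn : 2 ≤ n)

/-- The index of `tⁿ` among the tail variables `(t²,…,tⁿ)`. -/
def tailLast : Fin (n - 1) := ⟨n - 2, by omega⟩

/-- The quadratic sum `∑_{k=2}^{n-1} tᵏ t^{n+1-k}` written in the tail variables. -/
def tailMidSum (s : Fin (n - 1) → K) : K :=
  ∑ j : Fin (n - 1), if (j : ℕ) + 2 ≤ n - 1 then s j * s ⟨n - 3 - (j : ℕ), by omega⟩ else 0

/-- The argument `(t²/(ctⁿ+d), …, t^{n-1}/(ctⁿ+d), (atⁿ+b)/(ctⁿ+d))` of `H` in `slH`. -/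
def slHArg (a b c d : K) (s : Fin (n - 1) → K) : Fin (n - 1) → K := fun j =>
  if (j : ℕ) + 2 = n then mobius a b c d (s (tailLast hn))
  else s j / (c * s (tailLast hn) + d)

theorem slHArg_tailLast (a b c d : K) (s : Fin (n - 1) → K) :
    slHArg hn a b c d s (tailLast hn) = mobius a b c d (s (tailLast hn)) :=
  if_pos (by simp only [tailLast]; omega)

theorem tailMidSum_slHArg (a b c d : K) (s : Fin (n - 1) → K) :
    tailMidSum hn (slHArg hn a b c d s) = tailMidSum hn s / (c * s (tailLast hn) + d) ^ 2 := by
  rw [tailMidSum, tailMidSum, Finset.sum_div]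
  refine Finset.sum_congr rfl fun j _ => ?_
  split_ifs with h
  · simp only [slHArg, if_neg (show (j : ℕ) + 2 ≠ n by omega),
      if_neg (show n - 3 - (j : ℕ) + 2 ≠ n by omega)]
    rw [div_mul_div_comm, sq]
  · rw [zero_div]

theorem slHArg_slHArg (aA bA cA dA aB bB cB dB : K) (s : Fin (n - 1) → K)
    (h : cB * s (tailLast hn) + dB ≠ 0) :
    slHArg hn aA bA cA dA (slHArg hn aB bB cB dB s)
      = slHArg hn (aA * aB + bA * cB) (aA * bB + bA * dB)
          (cA * aB + dA * cB) (cA * bB + dA * dB) s := by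
  funext j
  rw [slHArg, slHArg_tailLast]
  split_ifs with hj
  · rw [mobius_mobius _ _ _ _ _ _ _ _ _ h, slHArg, if_pos hj]
  · rw [denom_mobius _ _ _ _ _ _ _ h, slHArg, slHArg, if_neg hj, if_neg hj,
      div_div_div_cancel_right₀ h]

end Tail

theorem slH_apply {n : ℕ} (hn : 2 ≤ n) (a b c d : ℂ) (H : (Fin (n - 1) → ℂ) → ℂ)
    (s : Fin (n - 1) → ℂ) :
    slH n hn a b c d H s
      = c / (8 * (c * s (tailLast hn) + d)) * tailMidSum hn s ^ 2
        + (c * s (tailLast hn) + d) ^ 2 * H (slHArg hn a b c d s) := rfl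

theorem slH_slH {n : ℕ} (hn : 2 ≤ n) (aA bA cA dA aB bB cB dB : ℂ)
    (hB : aB * dB - bB * cB = 1) (H : (Fin (n - 1) → ℂ) → ℂ) (s : Fin (n - 1) → ℂ)
    (h₁ : cB * s (tailLast hn) + dB ≠ 0)
    (h₂ : (cA * aB + dA * cB) * s (tailLast hn) + (cA * bB + dA * dB) ≠ 0) :
    slH n hn aB bB cB dB (slH n hn aA bA cA dA H) s
      = slH n hn (aA * aB + bA * cB) (aA * bB + bA * dB)
          (cA * aB + dA * cB) (cA * bB + dA * dB) H s := by
  rw [slH_apply, slH_apply, slH_apply, slHArg_tailLast, tailMidSum_slHArg,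
    slHArg_slHArg hn _ _ _ _ _ _ _ _ s h₁]
  set x := s (tailLast hn)
  have hjA : cA * mobius aB bB cB dB x + dA = ((cA * aB + dA * cB) * x + (cA * bB + dA * dB))
      / (cB * x + dB) := denom_mobius cA dA aB bB cB dB x h₁
  have hjA_ne : cA * mobius aB bB cB dB x + dA ≠ 0 := hjA ▸ div_ne_zero h₂ h₁
  generalize H _ = h
  calc _ = (cB / (cB * x + dB) + cA / (cA * mobius aB bB cB dB x + dA) / (cB * x + dB) ^ 2) / 8
            * tailMidSum hn s ^ 2 + ((cB * x + dB) * (cA * mobius aB bB cB dB x + dA)) ^ 2 * h := by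
        field_simp
        ring
    _ = _ := by
      rw [lowerLeft_div_denom_cocycle cA dA aB bB cB dB x hB h₁ h₂, hjA, mul_div_cancel₀ _ h₁,
        div_div, mul_comm _ (8 : ℂ)]

/-- `(F^A)^B = F^{AB}`: the `SL(2,ℂ)`-transformation of Frobenius potentials in standard form
is an action.  Here `A = ((aA,bA),(cA,dA))`, `B = ((aB,bB),(cB,dB))` are in `SL(2,ℂ)` and
`AB` is the matrix product, and the equality holds at every `t` with `c_B tⁿ + d_B ≠ 0`,
`c_{AB} tⁿ + d_{AB} ≠ 0` and the `AB`-transformed argument in the domain `U` of `H`. -/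
theorem slTransform_is_action (n : ℕ) (hn : 2 ≤ n)
    (U : Set (Fin (n - 1) → ℂ))
    (H : (Fin (n - 1) → ℂ) → ℂ)
    (aA bA cA dA aB bB cB dB : ℂ)
    (hB : aB * dB - bB * cB = 1) :
    ∀ t : Fin n → ℂ,
      cB * t (lastIdx n hn) + dB ≠ 0 →
      (cA * aB + dA * cB) * t (lastIdx n hn) + (cA * bB + dA * dB) ≠ 0 →
      (fun j : Fin (n - 1) => if (j : ℕ) + 2 = n
          then ((aA * aB + bA * cB) * t (lastIdx n hn) + (aA * bB + bA * dB)) /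
            ((cA * aB + dA * cB) * t (lastIdx n hn) + (cA * bB + dA * dB))
          else t ⟨(j : ℕ) + 1, by have := j.isLt; omega⟩ /
            ((cA * aB + dA * cB) * t (lastIdx n hn) + (cA * bB + dA * dB))) ∈ U →
      stdForm n hn (slH n hn aB bB cB dB (slH n hn aA bA cA dA H)) t
        = stdForm n hn (slH n hn (aA * aB + bA * cB) (aA * bB + bA * dB)
            (cA * aB + dA * cB) (cA * bB + dA * dB) H) t := by
  intro t h₁ h₂ _
  have hlast : tailArg t (tailLast hn) = t (lastIdx n hn) := congrArg t (Fin.ext (by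
    simp only [tailLast, lastIdx]; omega))
  simp only [stdForm]
  rw [slH_slH hn _ _ _ _ _ _ _ _ hB H _ (hlast ▸ h₁) (hlast ▸ h₂)]
end

section
/- For all integers n ≥ p ≥ 1, the number of cyclic compositions of n into p parts is Cy(n,p) = (1/n)·∑_{a | gcd(n,p)} φ(a)·C(n/a, p/a), where φ is Euler's totient function, C(·,·) is the binomial coefficient, and the sum runs over the positive divisors a of gcd(n,p). -/
/-- `f : Fin p → ℕ` is a composition of `n` into `p` (positive) parts. -/
def IsComp (n p : ℕ) (f : Fin p → ℕ) : Prop :=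
  (∀ i, 1 ≤ f i) ∧ ∑ i, f i = n

/-- The orbit of `f : Fin p → ℕ` under the rotation action of `ℤ/pℤ`. -/
def orbitOf {p : ℕ} (f : Fin p → ℕ) : Set (Fin p → ℕ) :=
  {g | ∃ k : Fin p, g = fun i => f (i + k)}

/-- The set of cyclic compositions of `n` into `p` parts, i.e. of rotation-orbits of
compositions of `n` into `p` parts. -/
def cycSet (n p : ℕ) : Set (Set (Fin p → ℕ)) :=
  {S | ∃ f : Fin p → ℕ, IsComp n p f ∧ S = orbitOf f}

/-- `Cy n p`: the number of cyclic compositions of `n` into `p` parts. -/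
noncomputable def Cy (n p : ℕ) : ℕ := (cycSet n p).ncard

/-- `CyPrim n p`: the number of primitive cyclic compositions of `n` into `p` parts,
i.e. of rotation-orbits with exactly `p` elements. -/
noncomputable def CyPrim (n p : ℕ) : ℕ :=
  {S | ∃ f : Fin p → ℕ, IsComp n p f ∧ S = orbitOf f ∧ S.ncard = p}.ncard

/-- The order of the (common) rotation-stabilizer of the elements of `S`. -/
noncomputable def stabOrd {p : ℕ} (S : Set (Fin p → ℕ)) : ℕ :=
  {k : Fin p | ∀ f ∈ S, (fun i => f (i + k)) = f}.ncard

/-!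
Burnside's lemma for the rotation action of `G = ℤ/pℤ` on compositions. A rotation by `k` of
order `a` fixes exactly the compositions that are constant on the cosets of `⟨k⟩`, i.e. the
pullbacks of compositions of `n / a` into `p / a` parts indexed by `G ⧸ ⟨k⟩`: by stars and
bars there are `C(n/a - 1, p/a - 1)` of them if `a ∣ n` and none otherwise. As `G` has `φ a`
elements of order `a` for each `a ∣ p`, and `n * C(n/a - 1, p/a - 1) = p * C(n/a, p/a)`, the
formula follows.
-/

open Finset AddAction
open AddSubgroup (zmultiples)

section QuotientFunctions

variable {G : Type*} [AddGroup G] (H : AddSubgroup G)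

def quotientFunEquivInvariant (α : Type*) :
    (G ⧸ H → α) ≃ {f : G → α // ∀ h ∈ H, ∀ i, f (i + h) = f i} where
  toFun g := ⟨fun i => g i, fun h hh i => congrArg g <|
    QuotientAddGroup.eq.2 (by simpa [add_assoc] using H.neg_mem hh)⟩
  invFun f := Quotient.lift f.1 fun a b hab => by
    rw [← f.2 _ (QuotientAddGroup.leftRel_apply.1 hab) a, add_neg_cancel_left]
  left_inv g := funext fun q => Quotient.inductionOn q fun _ => rfl
  right_inv _ := rfl

theorem sum_comp_quotientMk [Fintype G] [Fintype (G ⧸ H)] {M : Type*} [AddCommMonoid M]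
    (g : G ⧸ H → M) : ∑ i : G, g i = Nat.card H • ∑ q, g q := by
  classical
  rw [Fintype.sum_equiv AddSubgroup.addGroupEquivQuotientProdAddSubgroup (fun i : G => g i)
      (fun x => g x.1) (fun _ => rfl), Fintype.sum_prod_type, smul_sum]
  simp [Nat.card_eq_fintype_card]

end QuotientFunctions

theorem IsAddCyclic.sum_comp_addOrderOf {G : Type*} [AddGroup G] [Fintype G] [IsAddCyclic G]
    {M : Type*} [AddCommMonoid M] (F : ℕ → M) :
    ∑ k : G, F (addOrderOf k) = ∑ a ∈ (Nat.card G).divisors, a.totient • F a := by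
  classical
  rw [← sum_fiberwise_of_maps_to (g := addOrderOf) (t := (Nat.card G).divisors)
    fun k _ => Nat.mem_divisors.2 ⟨addOrderOf_dvd_natCard k, Nat.card_pos.ne'⟩]
  refine sum_congr rfl fun a ha => ?_
  rw [sum_congr rfl fun k hk => congrArg F (mem_filter.1 hk).2, sum_const,
    IsAddCyclic.card_addOrderOf_eq_totient (Nat.card_eq_fintype_card (α := G) ▸
      Nat.dvd_of_mem_divisors ha)]

theorem Nat.divisors_filter_dvd_eq_divisors_gcd {n p : ℕ} (hp : p ≠ 0) :
    {a ∈ p.divisors | a ∣ n} = (n.gcd p).divisors := by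
  ext a
  simp [Nat.dvd_gcd_iff, hp, and_comm]

theorem Nat.mul_choose_sub_one {m k : ℕ} (hm : 0 < m) (hk : 0 < k) :
    m * (m - 1).choose (k - 1) = k * m.choose k := by
  obtain ⟨m, rfl⟩ := Nat.exists_eq_succ_of_ne_zero hm.ne'
  obtain ⟨k, rfl⟩ := Nat.exists_eq_succ_of_ne_zero hk.ne'
  simpa [mul_comm k.succ] using Nat.add_one_mul_choose_eq m k

/-- For `ι = Fin p` the defining predicate is `IsComp n p`. -/
abbrev IndexedComposition (ι : Type*) [Fintype ι] (n : ℕ) : Type _ :=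
  {f : ι → ℕ // (∀ i, 1 ≤ f i) ∧ ∑ i, f i = n}

namespace IndexedComposition

section StarsAndBars

variable {ι : Type*} [Fintype ι]

instance (n : ℕ) : Finite (IndexedComposition ι n) :=
  Finite.of_injective (fun f i => (⟨f.1 i, Nat.lt_succ_of_le
    ((single_le_sum (fun _ _ => Nat.zero_le _) (mem_univ i)).trans_eq f.2.2)⟩ : Fin (n + 1)))
    fun _ _ h => Subtype.ext <| funext fun i => congrArg Fin.val (congrFun h i)

def equivSumAddCard (n : ℕ) :
    IndexedComposition ι n ≃ {g : ι → ℕ // ∑ i, g i + Fintype.card ι = n} where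
  toFun f := ⟨fun i => f.1 i - 1, by
    refine Eq.trans ?_ f.2.2
    rw [Fintype.card_eq_sum_ones, ← sum_add_distrib]
    exact sum_congr rfl fun i _ => Nat.sub_add_cancel (f.2.1 i)⟩
  invFun g := ⟨fun i => g.1 i + 1, fun _ => Nat.le_add_left _ _, by
    rw [sum_add_distrib, ← Fintype.card_eq_sum_ones, g.2]⟩
  left_inv f := Subtype.ext <| funext fun i => Nat.sub_add_cancel (f.2.1 i)
  right_inv g := Subtype.ext <| funext fun i => Nat.add_sub_cancel _ _

theorem card [Nonempty ι] {n : ℕ} (hn : 0 < n) :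
    Nat.card (IndexedComposition ι n) = (n - 1).choose (Nat.card ι - 1) := by
  classical
  rw [Nat.card_congr (equivSumAddCard n), Nat.card_eq_fintype_card (α := ι)]
  have hι := Fintype.card_pos (α := ι)
  rcases le_or_gt (Fintype.card ι) n with hle | hlt
  · have e := (Equiv.subtypeEquivRight fun _ => (eq_tsub_iff_add_eq_of_le hle).symm).trans
      (Sym.equivNatSumOfFintype ι (n - Fintype.card ι)).symm
    rw [Nat.card_congr e, Nat.card_eq_fintype_card, Sym.card_sym_eq_choose,
      show Fintype.card ι + (n - Fintype.card ι) - 1 = n - 1 by omega]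
    exact Nat.choose_symm_of_eq_add (by omega)
  · have : IsEmpty {g : ι → ℕ // ∑ i, g i + Fintype.card ι = n} := ⟨fun g => by omega⟩
    rw [Nat.card_of_isEmpty, Nat.choose_eq_zero_of_lt (by omega)]

end StarsAndBars

section Rotation

variable {G : Type*} [AddGroup G] [Fintype G] {n : ℕ}

instance : AddAction G (IndexedComposition G n) where
  vadd k f := ⟨fun i => f.1 (i + k), fun _ => f.2.1 _,
    (Equiv.sum_comp (Equiv.addRight k) f.1).trans f.2.2⟩
  zero_vadd f := Subtype.ext <| funext fun i => congrArg f.1 (add_zero i)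
  add_vadd k l f := Subtype.ext <| funext fun i => congrArg f.1 (add_assoc i k l).symm

theorem mem_fixedBy_iff {k : G} {f : IndexedComposition G n} :
    f ∈ fixedBy (IndexedComposition G n) k ↔
      ∀ h ∈ zmultiples k, ∀ i, f.1 (i + h) = f.1 i := by
  rw [mem_fixedBy, ← mem_stabilizer_iff, ← AddSubgroup.zmultiples_le, SetLike.le_def]
  simp only [mem_stabilizer_iff, Subtype.ext_iff, funext_iff]
  rfl

def fixedByEquiv (k : G) [Fintype (G ⧸ zmultiples k)] :
    fixedBy (IndexedComposition G n) k ≃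
      {g : G ⧸ zmultiples k → ℕ // (∀ q, 1 ≤ g q) ∧ addOrderOf k * ∑ q, g q = n} :=
  (Equiv.subtypeEquivRight fun _ => mem_fixedBy_iff).trans <|
    (Equiv.subtypeSubtypeEquivSubtypeInter _ _).trans <|
    (Equiv.subtypeEquivRight fun _ => and_comm).trans <|
    (Equiv.subtypeSubtypeEquivSubtypeInter _ _).symm.trans <|
    (Equiv.subtypeEquiv (quotientFunEquivInvariant _ ℕ) fun _ =>
      and_congr QuotientAddGroup.mk_surjective.forall <| by
        rw [← Nat.card_zmultiples, ← smul_eq_mul, ← sum_comp_quotientMk]; rfl).symm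

theorem card_fixedBy (hn : 0 < n) (k : G) :
    Nat.card (fixedBy (IndexedComposition G n) k) =
      if addOrderOf k ∣ n then (n / addOrderOf k - 1).choose (Nat.card G / addOrderOf k - 1)
      else 0 := by
  classical
  have hk : 0 < addOrderOf k := addOrderOf_pos k
  rw [Nat.card_congr (fixedByEquiv k)]
  split_ifs with hdvd
  · have hQ : Nat.card (G ⧸ zmultiples k) = Nat.card G / addOrderOf k := by
      rw [AddSubgroup.card_eq_card_quotient_mul_card_addSubgroup (zmultiples k),
        Nat.card_zmultiples, Nat.mul_div_cancel _ hk]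
    rw [← hQ, ← card (Nat.div_pos (Nat.le_of_dvd hn hdvd) hk)]
    exact Nat.card_congr <| Equiv.subtypeEquivRight fun _ => and_congr_right' <|
      ⟨fun h => by rw [← h, Nat.mul_div_cancel_left _ hk],
        fun h => by rw [h, Nat.mul_div_cancel' hdvd]⟩
  · have : IsEmpty
        {g : G ⧸ zmultiples k → ℕ // (∀ q, 1 ≤ g q) ∧ addOrderOf k * ∑ q, g q = n} :=
      ⟨fun g => hdvd ⟨_, g.2.2.symm⟩⟩
    exact Nat.card_of_isEmpty

theorem card_orbits_mul_card [IsAddCyclic G] (hn : 0 < n) :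
    Nat.card (orbitRel.Quotient G (IndexedComposition G n)) * Nat.card G =
      ∑ a ∈ (n.gcd (Nat.card G)).divisors,
        a.totient * (n / a - 1).choose (Nat.card G / a - 1) := by
  classical
  have := Fintype.ofFinite (IndexedComposition G n)
  let N a := if a ∣ n then (n / a - 1).choose (Nat.card G / a - 1) else 0
  calc _ = ∑ k : G, Nat.card (fixedBy (IndexedComposition G n) k) := by
        simp only [Nat.card_eq_fintype_card]
        exact (sum_card_fixedBy_eq_card_orbits_mul_card_addGroup G _).symm
    _ = ∑ k : G, N (addOrderOf k) := sum_congr rfl fun k _ => card_fixedBy hn k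
    _ = ∑ a ∈ (Nat.card G).divisors, a.totient • N a := IsAddCyclic.sum_comp_addOrderOf N
    _ = _ := by
        rw [← Nat.divisors_filter_dvd_eq_divisors_gcd Nat.card_pos.ne', sum_filter]
        simp only [N, smul_eq_mul, mul_ite, mul_zero]

theorem card_orbits_mul [IsAddCyclic G] (hn : 0 < n) :
    Nat.card (orbitRel.Quotient G (IndexedComposition G n)) * n =
      ∑ a ∈ (n.gcd (Nat.card G)).divisors, a.totient * (n / a).choose (Nat.card G / a) := by
  refine Nat.eq_of_mul_eq_mul_right (Nat.card_pos (α := G)) ?_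
  rw [mul_right_comm, card_orbits_mul_card hn, sum_mul, sum_mul]
  refine sum_congr rfl fun a ha => ?_
  obtain ⟨han, hap⟩ := Nat.dvd_gcd_iff.1 (Nat.dvd_of_mem_divisors ha)
  have ha0 : 0 < a := Nat.pos_of_mem_divisors ha
  set m := n / a
  set k := Nat.card G / a
  have hm : n = a * m := (Nat.mul_div_cancel' han).symm
  have hk : Nat.card G = a * k := (Nat.mul_div_cancel' hap).symm
  have key : m * (m - 1).choose (k - 1) = k * m.choose k := Nat.mul_choose_sub_one
    (Nat.div_pos (Nat.le_of_dvd hn han) ha0) (Nat.div_pos (Nat.le_of_dvd Nat.card_pos hap) ha0)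
  calc _ = a.totient * a * (m * (m - 1).choose (k - 1)) := by rw [hm]; ring
    _ = _ := by rw [key, hk]; ring

end Rotation

end IndexedComposition

instance (p : ℕ) [NeZero p] : IsAddCyclic (Fin p) :=
  isAddCyclic_of_surjective (ZMod.finEquiv p).symm (ZMod.finEquiv p).symm.surjective

section CyclicCompositions

variable {n p : ℕ} [NeZero p]

theorem IndexedComposition.image_val_orbit (f : IndexedComposition (Fin p) n) :
    Subtype.val '' orbit (Fin p) f = orbitOf f.1 := by
  ext g
  constructor
  · rintro ⟨_, ⟨k, rfl⟩, rfl⟩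
    exact ⟨k, rfl⟩
  · rintro ⟨k, rfl⟩
    exact ⟨k +ᵥ f, ⟨k, rfl⟩, rfl⟩

theorem cycSet_eq_range_orbit :
    cycSet n p = Set.range fun x : orbitRel.Quotient (Fin p) (IndexedComposition (Fin p) n) =>
      Subtype.val '' x.orbit := by
  ext S
  constructor
  · rintro ⟨f, hf, rfl⟩
    exact ⟨⟦⟨f, hf⟩⟧, IndexedComposition.image_val_orbit _⟩
  · rintro ⟨x, rfl⟩
    induction x using Quotient.inductionOn' with | h f =>
    exact ⟨f.1, f.2, IndexedComposition.image_val_orbit f⟩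

theorem cy_eq_card_orbitRel_quotient :
    Cy n p = Nat.card (orbitRel.Quotient (Fin p) (IndexedComposition (Fin p) n)) := by
  rw [Cy, cycSet_eq_range_orbit]
  exact Set.ncard_range_of_injective
    ((Set.image_injective.2 Subtype.val_injective).comp orbitRel.Quotient.orbit_injective)

end CyclicCompositions

/-- The number of cyclic compositions of `n` into `p` parts is
`Cy(n,p) = (1/n) ∑_{a | gcd(n,p)} φ(a) C(n/a, p/a)`. -/
theorem cyclic_composition_count (n p : ℕ) (hp : 1 ≤ p) (hpn : p ≤ n) :
    (Cy n p : ℚ) = 1 / (n : ℚ) *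
      ∑ a ∈ (Nat.gcd n p).divisors,
        (Nat.totient a : ℚ) * (Nat.choose (n / a) (p / a) : ℚ) := by
  have : NeZero p := ⟨by omega⟩
  have hcount := IndexedComposition.card_orbits_mul (G := Fin p) (n := n) (by omega)
  rw [Nat.card_fin, ← cy_eq_card_orbitRel_quotient] at hcount
  have hn : (n : ℚ) ≠ 0 := Nat.cast_ne_zero.2 (by omega)
  field_simp
  exact_mod_cast hcount
end

section
/- For all integers q ≥ p ≥ 1, the following identity holds in ℚ: ∑_ω 1/|Stab(ω)| = ∑_{d | gcd(q,p)} (1/d)·Cy_prim(q/d, p/d), where the left-hand sum runs over all cyclic compositions ω of q into p parts, |Stab(ω)| is the order of the rotation-stabilizer of (any representative of) ω, and the right-hand sum runs over the positive divisors d of gcd(q,p). -/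
/-!
Let `rotate f i = f (i + 1)`. The orbit of `f : Fin p → ℕ` under rotation has exactly
`minimalPeriod rotate f` elements and its stabilizer consists of the multiples of that period, so
`1 / |Stab ω| = |ω| / p` and the left-hand side is the number of compositions of `q` into `p`
parts, divided by `p`. A composition of minimal period `p / d` is the `d`-fold repetition of a
composition of `q / d` into `p / d` parts of minimal period `p / d`, i.e. of a primitive one, and
primitive compositions are `p / d` times as many as primitive cyclic compositions. Sorting the
compositions of `q` by `d` gives the right-hand side.
-/

open Function Set

namespace CyclicComposition

open Fin.NatCast

section Rotation

variable {α : Type*} {p : ℕ} [NeZero p]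

def rotate (f : Fin p → α) : Fin p → α := fun i => f (i + 1)

lemma rotate_iterate_apply (f : Fin p → α) (n : ℕ) (i : Fin p) :
    rotate^[n] f i = f (i + n) := by
  induction n generalizing f with
  | zero => simp
  | succ n ih => rw [iterate_succ_apply, ih, rotate, Nat.cast_succ, add_assoc]

lemma isPeriodicPt_rotate_iff {f : Fin p → α} {n : ℕ} :
    IsPeriodicPt rotate n f ↔ (fun i => f (i + n)) = f := by
  simp only [IsPeriodicPt, IsFixedPt, funext_iff, rotate_iterate_apply]

lemma isPeriodicPt_rotate_card (f : Fin p → α) : IsPeriodicPt rotate p f :=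
  isPeriodicPt_rotate_iff.mpr (by simp)

lemma minimalPeriod_rotate_pos (f : Fin p → α) : 0 < minimalPeriod rotate f :=
  (isPeriodicPt_rotate_card f).minimalPeriod_pos (NeZero.pos p)

lemma minimalPeriod_rotate_dvd (f : Fin p → α) : minimalPeriod rotate f ∣ p :=
  (isPeriodicPt_rotate_card f).minimalPeriod_dvd

end Rotation

section Orbit

variable {p : ℕ} [NeZero p]

lemma orbitOf_eq_image (f : Fin p → ℕ) :
    orbitOf f = (rotate^[·] f) '' Iio (minimalPeriod rotate f) := by
  ext g
  constructor
  · rintro ⟨k, rfl⟩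
    refine ⟨k.val % minimalPeriod rotate f, Nat.mod_lt _ (minimalPeriod_rotate_pos f), ?_⟩
    funext i
    beta_reduce
    rw [iterate_mod_minimalPeriod_eq, rotate_iterate_apply, Fin.cast_val_eq_self]
  · rintro ⟨n, -, rfl⟩
    exact ⟨n, funext (rotate_iterate_apply f n)⟩

lemma ncard_orbitOf (f : Fin p → ℕ) : (orbitOf f).ncard = minimalPeriod rotate f := by
  rw [orbitOf_eq_image, iterate_injOn_Iio_minimalPeriod.ncard_image, ncard_Iio_nat]

lemma mem_orbitOf_self (f : Fin p → ℕ) : f ∈ orbitOf f :=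
  ⟨0, by simp⟩

lemma orbitOf_eq_of_mem {f g : Fin p → ℕ} (hg : g ∈ orbitOf f) : orbitOf g = orbitOf f := by
  obtain ⟨k, rfl⟩ := hg
  ext h
  constructor
  · rintro ⟨j, rfl⟩
    exact ⟨j + k, by simp only [add_assoc]⟩
  · rintro ⟨j, rfl⟩
    exact ⟨j - k, by simp only [add_assoc, sub_add_cancel]⟩

lemma ncard_setOf_dvd_val {m : ℕ} (hm : m ∣ p) : {k : Fin p | m ∣ k.val}.ncard = p / m := by
  have hm0 : 0 < m := Nat.pos_of_dvd_of_pos hm (NeZero.pos p)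
  let e : {k : Fin p | m ∣ k.val} ≃ Fin (p / m) :=
    { toFun := fun k => ⟨k.1.val / m, Nat.div_lt_div_of_lt_of_dvd hm k.1.isLt⟩
      invFun := fun j => ⟨⟨j.val * m, (Nat.lt_div_iff_mul_lt_of_dvd hm0.ne' hm).mp j.isLt⟩,
        dvd_mul_left m j.val⟩
      left_inv := fun k => Subtype.ext (Fin.ext (Nat.div_mul_cancel k.2))
      right_inv := fun j => Fin.ext (Nat.mul_div_cancel _ hm0) }
  rw [← Nat.card_coe_set_eq, Nat.card_congr e, Nat.card_eq_fintype_card, Fintype.card_fin]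

lemma stabOrd_orbitOf (f : Fin p → ℕ) : stabOrd (orbitOf f) = p / minimalPeriod rotate f := by
  have hstab : {k : Fin p | ∀ g ∈ orbitOf f, (fun i => g (i + k)) = g} =
      {k : Fin p | minimalPeriod rotate f ∣ k.val} := by
    ext k
    rw [mem_ofPred_eq, mem_ofPred_eq, ← isPeriodicPt_iff_minimalPeriod_dvd, isPeriodicPt_rotate_iff,
      Fin.cast_val_eq_self]
    refine ⟨fun h => h f (mem_orbitOf_self f), ?_⟩
    rintro hk _ ⟨j, rfl⟩
    funext i
    beta_reduce
    rw [add_right_comm]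
    exact congrFun hk (i + j)
  rw [stabOrd, hstab, ncard_setOf_dvd_val (minimalPeriod_rotate_dvd f)]

end Orbit

section Extension

variable {α : Type*} {m p : ℕ} [NeZero m] [NeZero p]

def extendPeriodic (p : ℕ) (g : Fin m → α) : Fin p → α := fun i => g i.val

lemma semiconj_extendPeriodic_rotate (hmp : m ∣ p) :
    Semiconj (extendPeriodic p : (Fin m → α) → Fin p → α) rotate rotate := by
  intro g
  funext i
  simp only [extendPeriodic, rotate]
  congr 1
  ext
  simp [Fin.val_add, Fin.val_natCast, Nat.mod_mod_of_dvd _ hmp, Nat.add_mod]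

lemma extendPeriodic_apply_natCast (hmp : m ∣ p) (g : Fin m → α) (j : Fin m) :
    extendPeriodic p g (j.val : Fin p) = g j := by
  simp only [extendPeriodic]
  congr 1
  ext
  simp [Fin.val_natCast, Nat.mod_mod_of_dvd _ hmp, Nat.mod_eq_of_lt j.isLt]

lemma extendPeriodic_injective (hmp : m ∣ p) :
    Injective (extendPeriodic p : (Fin m → α) → Fin p → α) := fun g g' h =>
  funext fun j => by
    rw [← extendPeriodic_apply_natCast hmp g, h, extendPeriodic_apply_natCast hmp]

lemma minimalPeriod_rotate_extendPeriodic (hmp : m ∣ p) (g : Fin m → α) :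
    minimalPeriod rotate (extendPeriodic p g) = minimalPeriod rotate g := by
  refine minimalPeriod_eq_minimalPeriod_iff.mpr fun n => ?_
  simp only [IsPeriodicPt, IsFixedPt, ← (semiconj_extendPeriodic_rotate hmp).iterate_right n g]
  exact (extendPeriodic_injective hmp).eq_iff

lemma extendPeriodic_restrict {f : Fin p → α} (hf : IsPeriodicPt rotate m f) :
    extendPeriodic p (fun j : Fin m => f j.val) = f := by
  funext i
  have h := congrFun (isPeriodicPt_rotate_iff.mp (hf.mul_const (i.val / m))) (i.val % m : ℕ)
  simp only [← Nat.cast_add, Nat.mod_add_div, Fin.cast_val_eq_self] at h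
  simp only [extendPeriodic, Fin.val_natCast, h]

lemma sum_extendPeriodic [AddCommMonoid α] (hmp : m ∣ p) (g : Fin m → α) :
    ∑ i, extendPeriodic p g i = (p / m) • ∑ j, g j := by
  obtain ⟨c, rfl⟩ := hmp
  let e : Fin c × Fin m ≃ Fin (m * c) := finProdFinEquiv.trans (finCongr (mul_comm c m))
  rw [← e.sum_comp, Fintype.sum_prod_type, Nat.mul_div_cancel_left c (NeZero.pos m)]
  have he : ∀ x : Fin c, ∀ y : Fin m, extendPeriodic (m * c) g (e (x, y)) = g y := fun x y => by
    simp only [extendPeriodic, e, Equiv.trans_apply, finCongr_apply, Fin.val_cast,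
      finProdFinEquiv_apply_val]
    congr 1
    ext
    rw [Fin.val_natCast, Nat.add_mul_mod_self_left, Nat.mod_eq_of_lt y.isLt]
  simp only [he, Finset.sum_const, Finset.card_univ, Fintype.card_fin]

end Extension

section Compositions

variable {n p : ℕ} [NeZero p]

lemma finite_setOf_isComp (n p : ℕ) : {f : Fin p → ℕ | IsComp n p f}.Finite :=
  (Set.Finite.pi fun _ => Set.finite_Iic n).subset fun f hf i _ =>
    hf.2 ▸ Finset.single_le_sum (fun j _ => Nat.zero_le (f j)) (Finset.mem_univ i)

lemma IsComp.of_mem_orbitOf {f g : Fin p → ℕ} (hf : IsComp n p f) (hg : g ∈ orbitOf f) :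
    IsComp n p g := by
  obtain ⟨k, rfl⟩ := hg
  exact ⟨fun i => hf.1 _, hf.2 ▸ Fintype.sum_equiv (Equiv.addRight k) _ _ fun _ => rfl⟩

lemma finsum_ncard_orbitOf {C : Set (Fin p → ℕ)} (hC : C.Finite)
    (hcl : ∀ f ∈ C, orbitOf f ⊆ C) : ∑ᶠ S ∈ orbitOf '' C, S.ncard = C.ncard := by
  have hunion : ⋃ S ∈ orbitOf '' C, S = C := by
    rw [biUnion_image]
    exact Subset.antisymm (iUnion₂_subset hcl) fun f hf => mem_biUnion hf (mem_orbitOf_self f)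
  have hdisj : (orbitOf '' C).PairwiseDisjoint id := by
    rintro _ ⟨f, -, rfl⟩ _ ⟨g, -, rfl⟩ hne
    refine disjoint_left.mpr fun h hf hg => hne ?_
    rw [← orbitOf_eq_of_mem hf, orbitOf_eq_of_mem hg]
  conv_rhs => rw [← hunion]
  exact ((hC.image orbitOf).ncard_biUnion (fun S ⟨f, hf, hS⟩ => hC.subset (hS ▸ hcl f hf))
    hdisj).symm

lemma cycSet_eq_image (n p : ℕ) : cycSet n p = orbitOf '' {f | IsComp n p f} := by
  ext S
  simp [cycSet, eq_comm]

lemma one_div_stabOrd_orbitOf (f : Fin p → ℕ) :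
    1 / (stabOrd (orbitOf f) : ℚ) = (orbitOf f).ncard / p := by
  have hdvd := minimalPeriod_rotate_dvd f
  have hpos := minimalPeriod_rotate_pos f
  rw [stabOrd_orbitOf, ncard_orbitOf, Nat.cast_div hdvd (by positivity)]
  field_simp

lemma finsum_one_div_stabOrd :
    ∑ᶠ S ∈ cycSet n p, 1 / (stabOrd S : ℚ) = {f : Fin p → ℕ | IsComp n p f}.ncard / p := by
  have hfin : (cycSet n p).Finite := cycSet_eq_image n p ▸ (finite_setOf_isComp n p).image _
  calc ∑ᶠ S ∈ cycSet n p, 1 / (stabOrd S : ℚ)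
      = ∑ᶠ S ∈ cycSet n p, (S.ncard : ℚ) * (1 / p) := by
        refine finsum_mem_congr rfl ?_
        rintro _ ⟨f, -, rfl⟩
        rw [one_div_stabOrd_orbitOf, div_eq_mul_one_div]
    _ = ((∑ᶠ S ∈ cycSet n p, S.ncard : ℕ) : ℚ) * (1 / p) := by
        rw [← finsum_mem_mul' _ _ hfin, Nat.cast_finsum_mem hfin]
    _ = {f : Fin p → ℕ | IsComp n p f}.ncard / p := by
        rw [cycSet_eq_image, finsum_ncard_orbitOf (finite_setOf_isComp n p)
          fun f hf g hg => IsComp.of_mem_orbitOf hf hg, ← div_eq_mul_one_div]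

def primComp (n p : ℕ) [NeZero p] : Set (Fin p → ℕ) :=
  {f | IsComp n p f ∧ minimalPeriod rotate f = p}

lemma cyPrim_mul_eq : CyPrim n p * p = (primComp n p).ncard := by
  have hP : (primComp n p).Finite := (finite_setOf_isComp n p).subset fun f hf => hf.1
  have hcl : ∀ f ∈ primComp n p, orbitOf f ⊆ primComp n p := fun f hf g hg =>
    ⟨IsComp.of_mem_orbitOf hf.1 hg,
      by rw [← ncard_orbitOf, orbitOf_eq_of_mem hg, ncard_orbitOf, hf.2]⟩
  have hset : {S | ∃ f : Fin p → ℕ, IsComp n p f ∧ S = orbitOf f ∧ S.ncard = p} =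
      orbitOf '' primComp n p := by
    ext S
    constructor
    · rintro ⟨f, hf, rfl, hcard⟩
      exact ⟨f, ⟨hf, ncard_orbitOf f ▸ hcard⟩, rfl⟩
    · rintro ⟨f, ⟨hf, hper⟩, rfl⟩
      exact ⟨f, hf, rfl, ncard_orbitOf f ▸ hper⟩
  calc CyPrim n p * p = (∑ᶠ S ∈ orbitOf '' primComp n p, 1) * p := by
        rw [finsum_one, CyPrim, hset]
    _ = ∑ᶠ S ∈ orbitOf '' primComp n p, S.ncard := by
        rw [finsum_mem_mul' _ _ (hP.image orbitOf)]
        refine finsum_mem_congr rfl ?_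
        rintro _ ⟨f, hf, rfl⟩
        rw [one_mul, ncard_orbitOf, hf.2]
    _ = (primComp n p).ncard := finsum_ncard_orbitOf hP hcl

lemma div_minimalPeriod_dvd {f : Fin p → ℕ} (hf : IsComp n p f) :
    p / minimalPeriod rotate f ∣ n := by
  have : NeZero (minimalPeriod rotate f) := ⟨(minimalPeriod_rotate_pos f).ne'⟩
  have h := sum_extendPeriodic (minimalPeriod_rotate_dvd f) fun j => f j.val
  rw [extendPeriodic_restrict (isPeriodicPt_minimalPeriod rotate f), hf.2, smul_eq_mul] at h
  exact Dvd.intro _ h.symm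

lemma ncard_setOf_isComp_eq_sum :
    {f : Fin p → ℕ | IsComp n p f}.ncard = ∑ d ∈ (n.gcd p).divisors,
      {f : Fin p → ℕ | IsComp n p f ∧ minimalPeriod rotate f = p / d}.ncard := by
  have hunion : ⋃ d ∈ ((n.gcd p).divisors : Set ℕ),
      {f : Fin p → ℕ | IsComp n p f ∧ minimalPeriod rotate f = p / d} = {f | IsComp n p f} := by
    refine Subset.antisymm (iUnion₂_subset fun d _ f hf => hf.1) fun f hf => ?_
    have hdvd := minimalPeriod_rotate_dvd f
    refine mem_biUnion (x := p / minimalPeriod rotate f) ?_ ⟨hf, ?_⟩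
    · exact Finset.mem_coe.mpr <| Nat.mem_divisors.mpr
        ⟨Nat.dvd_gcd (div_minimalPeriod_dvd hf) (Nat.div_dvd_of_dvd hdvd),
          Nat.gcd_ne_zero_right (NeZero.ne p)⟩
    · exact (Nat.div_div_self hdvd (NeZero.ne p)).symm
  have hdisj : ((n.gcd p).divisors : Set ℕ).PairwiseDisjoint
      fun d => {f : Fin p → ℕ | IsComp n p f ∧ minimalPeriod rotate f = p / d} := by
    intro d hd d' hd' hne
    refine disjoint_left.mpr fun f hf hf' => hne ?_
    have hdp : ∀ {e}, e ∈ (n.gcd p).divisors → e ∣ p := fun he =>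
      (Nat.dvd_of_mem_divisors he).trans (Nat.gcd_dvd_right n p)
    rw [← Nat.div_div_self (hdp hd) (NeZero.ne p), ← Nat.div_div_self (hdp hd') (NeZero.ne p),
      ← hf.2, ← hf'.2]
  conv_lhs => rw [← hunion]
  rw [(Finset.finite_toSet _).ncard_biUnion (fun d _ => (finite_setOf_isComp n p).subset
    fun f hf => hf.1) hdisj, finsum_mem_coe_finset]

lemma setOf_isComp_minimalPeriod_eq_image {d : ℕ} (hdn : d ∣ n) (hdp : d ∣ p) [NeZero (p / d)] :
    {f : Fin p → ℕ | IsComp n p f ∧ minimalPeriod rotate f = p / d} =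
      extendPeriodic p '' primComp (n / d) (p / d) := by
  have hmp : p / d ∣ p := Nat.div_dvd_of_dvd hdp
  have hd : p / (p / d) = d := Nat.div_div_self hdp (NeZero.ne p)
  ext f
  constructor
  · rintro ⟨hf, hper⟩
    have hrestrict : extendPeriodic p (fun j : Fin (p / d) => f j.val) = f :=
      extendPeriodic_restrict (hper ▸ isPeriodicPt_minimalPeriod rotate f)
    refine ⟨fun j => f j.val, ⟨⟨fun j => hf.1 _, ?_⟩, ?_⟩, hrestrict⟩
    · have hsum := sum_extendPeriodic hmp fun j : Fin (p / d) => f j.val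
      rw [hrestrict, hf.2, hd, smul_eq_mul] at hsum
      rw [hsum, Nat.mul_div_cancel_left _ (Nat.pos_of_dvd_of_pos hdp (NeZero.pos p))]
    · rw [← minimalPeriod_rotate_extendPeriodic hmp, hrestrict, hper]
  · rintro ⟨g, ⟨hg, hper⟩, rfl⟩
    refine ⟨⟨fun i => hg.1 _, ?_⟩, ?_⟩
    · rw [sum_extendPeriodic hmp, hd, hg.2, smul_eq_mul, Nat.mul_div_cancel' hdn]
    · rw [minimalPeriod_rotate_extendPeriodic hmp, hper]

lemma ncard_setOf_isComp_minimalPeriod_eq {d : ℕ} (hdn : d ∣ n) (hdp : d ∣ p) [NeZero (p / d)] :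
    {f : Fin p → ℕ | IsComp n p f ∧ minimalPeriod rotate f = p / d}.ncard =
      (primComp (n / d) (p / d)).ncard := by
  rw [setOf_isComp_minimalPeriod_eq_image hdn hdp,
    ncard_image_of_injective _ (extendPeriodic_injective (Nat.div_dvd_of_dvd hdp))]

end Compositions

end CyclicComposition

open CyclicComposition

theorem stabilizer_sum_eq_general (q p : ℕ) (hp : 1 ≤ p) :
    (∑ᶠ S ∈ cycSet q p, 1 / (stabOrd S : ℚ)) =
      ∑ d ∈ (Nat.gcd q p).divisors, 1 / (d : ℚ) * (CyPrim (q / d) (p / d) : ℚ) := by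
  have : NeZero p := ⟨by omega⟩
  rw [finsum_one_div_stabOrd, ncard_setOf_isComp_eq_sum, Nat.cast_sum, Finset.sum_div]
  refine Finset.sum_congr rfl fun d hd => ?_
  obtain ⟨hdq, hdp⟩ := Nat.dvd_gcd_iff.mp (Nat.dvd_of_mem_divisors hd)
  have hd0 : 0 < d := Nat.pos_of_mem_divisors hd
  have : NeZero (p / d) := ⟨(Nat.div_pos (Nat.le_of_dvd (by omega) hdp) hd0).ne'⟩
  rw [ncard_setOf_isComp_minimalPeriod_eq hdq hdp, ← cyPrim_mul_eq,
    Nat.cast_mul, Nat.cast_div hdp (by positivity)]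
  field_simp

/-- For `q ≥ p ≥ 1`,
`∑_ω 1/|Stab(ω)| = ∑_{d | gcd(q,p)} (1/d)·Cy_prim(q/d, p/d)`,
the left-hand sum ranging over all cyclic compositions `ω` of `q` into `p` parts. -/
theorem stabilizer_sum_eq (q p : ℕ) (hp : 1 ≤ p) (hpq : p ≤ q) :
    (∑ᶠ S ∈ cycSet q p, 1 / (stabOrd S : ℚ)) =
      ∑ d ∈ (Nat.gcd q p).divisors, 1 / (d : ℚ) * (CyPrim (q / d) (p / d) : ℚ) :=
  stabilizer_sum_eq_general q p hp
end

section
/- For every integer q ≥ 1, the following identity holds in ℚ: ∑_{p=1}^{q} (−1)^p · ( ∑_ω 1/|Stab(ω)| ) = −1/q, where for each p the inner sum runs over all cyclic compositions ω of q into p parts and |Stab(ω)| is the order of the rotation-stabilizer of (any representative of) ω. -/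
/-! By orbit–stabilizer, a cyclic composition `ω` of `q` into `p` parts has
`1 / |Stab ω| = |ω| / p`, so the inner sum is the number of compositions of `q` into `p` parts
divided by `p`, that is `C(q-1, p-1) / p = C(q, p) / q`. The alternating sum of `C(q, p)` over
`1 ≤ p ≤ q` is `-1`, being `(1 - 1)^q` with its `p = 0` term removed. -/

section Rotation

variable {p : ℕ} [NeZero p]

instance rotationAddAction : AddAction (Fin p) (Fin p → ℕ) where
  vadd k f i := f (i + k)
  zero_vadd f := funext fun i => congrArg f (add_zero i)
  add_vadd j k f := funext fun i => congrArg f (add_assoc i j k).symm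

lemma orbitOf_eq_orbit (f : Fin p → ℕ) : orbitOf f = AddAction.orbit (Fin p) f := by
  ext g
  simp only [orbitOf, Set.mem_ofPred_eq, AddAction.mem_orbit_iff, eq_comm (a := g)]
  rfl

lemma stabOrd_orbitOf (f : Fin p → ℕ) :
    stabOrd (orbitOf f) = Nat.card (AddAction.stabilizer (Fin p) f) := by
  rw [stabOrd, ← Nat.card_coe_set_eq]
  congr 2
  ext k
  simp only [Set.mem_ofPred_eq, SetLike.mem_coe, AddAction.mem_stabilizer_iff, orbitOf_eq_orbit]
  refine ⟨fun h => h f (AddAction.mem_orbit_self f), ?_⟩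
  rintro h _ ⟨j, rfl⟩
  change k +ᵥ j +ᵥ f = j +ᵥ f
  rw [vadd_comm, h]

lemma ncard_orbitOf_mul_stabOrd (f : Fin p → ℕ) :
    (orbitOf f).ncard * stabOrd (orbitOf f) = p := by
  rw [stabOrd_orbitOf, orbitOf_eq_orbit, ← AddAction.index_stabilizer,
    AddSubgroup.index_mul_card, Nat.card_eq_fintype_card, Fintype.card_fin]

lemma one_div_stabOrd_orbitOf (f : Fin p → ℕ) :
    1 / (stabOrd (orbitOf f) : ℚ) = (orbitOf f).ncard / p := by
  have h : ((orbitOf f).ncard : ℚ) * stabOrd (orbitOf f) = p := by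
    exact_mod_cast ncard_orbitOf_mul_stabOrd f
  have hs : (stabOrd (orbitOf f) : ℚ) ≠ 0 := by
    rintro h0; rw [h0, mul_zero] at h; exact NeZero.ne (p : ℚ) h.symm
  rw [div_eq_div_iff hs (NeZero.ne _), one_mul, h]

end Rotation

section CyclicCompositions

lemma IsComp.vadd {n p : ℕ} [NeZero p] {f : Fin p → ℕ} (hf : IsComp n p f) (k : Fin p) :
    IsComp n p (k +ᵥ f) :=
  ⟨fun i => hf.1 (i + k), (Fintype.sum_equiv (Equiv.addRight k) _ f fun _ => rfl).trans hf.2⟩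

lemma setOf_isComp_finite (n p : ℕ) : {f : Fin p → ℕ | IsComp n p f}.Finite :=
  (Set.Finite.pi' fun _ => Set.finite_Iic n).subset fun f hf i =>
    (Finset.single_le_sum (fun j _ => Nat.zero_le (f j)) (Finset.mem_univ i)).trans hf.2.le

lemma cycSet_eq_image (n p : ℕ) : cycSet n p = orbitOf '' {f : Fin p → ℕ | IsComp n p f} := by
  ext S
  simp only [cycSet, Set.mem_image, Set.mem_ofPred_eq, eq_comm (a := S)]

lemma cycSet_finite (n p : ℕ) : (cycSet n p).Finite :=
  cycSet_eq_image n p ▸ (setOf_isComp_finite n p).image _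

variable {n p : ℕ} [NeZero p]

lemma cycSet_pairwiseDisjoint : (cycSet n p).PairwiseDisjoint id := by
  refine (AddAction.orbit.pairwiseDisjoint (G := Fin p)).subset ?_
  rintro _ ⟨f, -, rfl⟩
  exact ⟨f, (orbitOf_eq_orbit f).symm⟩

lemma sUnion_cycSet : ⋃₀ cycSet n p = {f : Fin p → ℕ | IsComp n p f} := by
  ext g
  simp only [cycSet_eq_image, Set.sUnion_image, Set.mem_iUnion, Set.mem_ofPred_eq, exists_prop,
    orbitOf_eq_orbit]
  refine ⟨?_, fun hg => ⟨g, hg, AddAction.mem_orbit_self g⟩⟩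
  rintro ⟨f, hf, k, rfl⟩
  exact hf.vadd k

lemma finsum_cycSet_one_div_stabOrd :
    ∑ᶠ S ∈ cycSet n p, 1 / (stabOrd S : ℚ) = {f : Fin p → ℕ | IsComp n p f}.ncard / p := by
  have horbit_finite : ∀ S ∈ cycSet n p, S.Finite := by
    rintro _ ⟨f, -, rfl⟩
    exact orbitOf_eq_orbit f ▸ Set.finite_range _
  have hcard : (⋃₀ cycSet n p).ncard = ∑ᶠ S ∈ cycSet n p, S.ncard := by
    rw [Set.sUnion_eq_biUnion]
    exact (cycSet_finite n p).ncard_biUnion horbit_finite cycSet_pairwiseDisjoint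
  calc ∑ᶠ S ∈ cycSet n p, 1 / (stabOrd S : ℚ)
      = ∑ᶠ S ∈ cycSet n p, (S.ncard : ℚ) * (p : ℚ)⁻¹ := by
        refine finsum_mem_congr rfl ?_
        rintro _ ⟨f, -, rfl⟩
        rw [one_div_stabOrd_orbitOf, div_eq_mul_inv]
    _ = {f : Fin p → ℕ | IsComp n p f}.ncard / p := by
        rw [← finsum_mem_mul, ← Nat.cast_finsum_mem (cycSet_finite n p), ← hcard, sUnion_cycSet,
          div_eq_mul_inv]

end CyclicCompositions

section Counting

open Finset

lemma card_piAntidiag_univ_fin (p m : ℕ) :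
    #(piAntidiag (univ : Finset (Fin p)) m) = (p + m - 1).choose m := by
  rw [← map_sym_eq_piAntidiag, card_map, sym_univ, card_univ, Sym.card_sym_eq_choose,
    Fintype.card_fin]

lemma setOf_isComp_eq_image {n p : ℕ} (hpn : p ≤ n) :
    {f : Fin p → ℕ | IsComp n p f} =
      (· + 1) '' (piAntidiag (univ : Finset (Fin p)) (n - p) : Set (Fin p → ℕ)) := by
  ext f
  simp only [IsComp, Set.mem_ofPred_eq, Set.mem_image, mem_coe, mem_piAntidiag]
  constructor
  · rintro ⟨hpos, hsum⟩
    refine ⟨f - 1, ?_, funext fun i => Nat.sub_add_cancel (hpos i)⟩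
    have h : ∑ i, (f i - 1 + 1) = n :=
      (sum_congr rfl fun i _ => Nat.sub_add_cancel (hpos i)).trans hsum
    rw [sum_add_distrib, sum_const, card_univ, Fintype.card_fin, smul_eq_mul, mul_one] at h
    simp only [Pi.sub_apply, Pi.one_apply, mem_univ, implies_true, and_true]
    omega
  · rintro ⟨g, ⟨hg, -⟩, rfl⟩
    refine ⟨fun i => Nat.le_add_left 1 (g i), ?_⟩
    simp only [Pi.add_apply, Pi.one_apply, sum_add_distrib, hg, sum_const, card_univ,
      Fintype.card_fin, smul_eq_mul, mul_one]
    omega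

lemma ncard_setOf_isComp {n p : ℕ} (hp : 1 ≤ p) (hpn : p ≤ n) :
    {f : Fin p → ℕ | IsComp n p f}.ncard = (n - 1).choose (p - 1) := by
  rw [setOf_isComp_eq_image hpn, Set.ncard_image_of_injective _ (add_left_injective 1),
    Set.ncard_coe_finset, card_piAntidiag_univ_fin, show p + (n - p) - 1 = n - 1 by omega,
    show n - p = (n - 1) - (p - 1) by omega, Nat.choose_symm (by omega)]

end Counting

lemma Nat.cast_choose_pred_div {K : Type*} [Field K] [CharZero K] {n k : ℕ} (hn : 1 ≤ n)
    (hk : 1 ≤ k) : ((n - 1).choose (k - 1) : K) / k = n.choose k / n := by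
  obtain ⟨n, rfl⟩ := Nat.exists_eq_add_of_le' hn
  obtain ⟨k, rfl⟩ := Nat.exists_eq_add_of_le' hk
  have h : ((n + 1 : ℕ) : K) * n.choose k = (n + 1).choose (k + 1) * (k + 1 : ℕ) := by
    exact_mod_cast Nat.add_one_mul_choose_eq n k
  rw [Nat.add_sub_cancel, Nat.add_sub_cancel,
    div_eq_div_iff (Nat.cast_ne_zero.2 k.succ_ne_zero) (Nat.cast_ne_zero.2 n.succ_ne_zero),
    mul_comm, h]

lemma sum_Icc_neg_one_pow_mul_choose {R : Type*} [CommRing R] {n : ℕ} (hn : n ≠ 0) :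
    ∑ k ∈ Finset.Icc 1 n, (-1 : R) ^ k * n.choose k = -1 := by
  have h := congrArg (Int.cast : ℤ → R) (Int.alternating_sum_range_choose_of_ne hn)
  push_cast at h
  rw [Finset.range_eq_Ico, Finset.sum_eq_sum_Ico_succ_bot (by omega : 0 < n + 1),
    Finset.Ico_add_one_right_eq_Icc] at h
  simpa [eq_neg_iff_add_eq_zero, add_comm] using h

/-- For `q ≥ 1`,
`∑_{p=1}^{q} (-1)^p ∑_ω 1/|Stab(ω)| = -1/q`,
the inner sum ranging over all cyclic compositions `ω` of `q` into `p` parts. -/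
theorem alternating_stabilizer_sum (q : ℕ) (hq : 1 ≤ q) :
    (∑ p ∈ Finset.Icc 1 q, (-1 : ℚ) ^ p * ∑ᶠ S ∈ cycSet q p, 1 / (stabOrd S : ℚ)) =
      -1 / (q : ℚ) := by
  have hinner : ∀ p ∈ Finset.Icc 1 q,
      (-1 : ℚ) ^ p * ∑ᶠ S ∈ cycSet q p, 1 / (stabOrd S : ℚ) = (-1) ^ p * q.choose p / q := by
    intro p hp
    obtain ⟨hp, hpq⟩ := Finset.mem_Icc.1 hp
    have : NeZero p := NeZero.of_pos hp
    rw [finsum_cycSet_one_div_stabOrd, ncard_setOf_isComp hp hpq,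
      Nat.cast_choose_pred_div hq hp, mul_div_assoc]
  rw [Finset.sum_congr rfl hinner, ← Finset.sum_div, sum_Icc_neg_one_pow_mul_choose (by omega)]
end

section
/- Let A = ((a,b),(c,d)) ∈ SL(2,ℂ), let τ ∈ ℂ with cτ+d ≠ 0, set γ := (aτ+b)/(cτ+d) and σ := −c(cτ+d), and let m ≥ 1 be an integer. Let f be holomorphic on an open subset of ℂ containing γ. Then there exists ε > 0 such that for every s ∈ ℂ with |s| < ε, writing t := τ + (cτ+d)²·s, one has ct+d ≠ 0 and (ct+d)^{−m}·f((at+b)/(ct+d)) = (cτ+d)^{−m}·∑_{j=0}^{∞} ( ∑_{p+k=j, p,k≥0} C(m+j−1, k)·(f^{(p)}(γ)/p!)·σ^k ) s^j, the power series on the right converging absolutely for |s| < ε. Here C(·,·) is the binomial coefficient and f^{(p)} the p-th derivative of f. -/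
open Finset Nat

/-!
Write `Λ = cτ + d`, `σ = -cΛ`, `γ = (aτ + b)/Λ` and `A p = f⁽ᵖ⁾(γ)/p!`. Since `ad - bc = 1`, the
substitution `t = τ + Λ²s` gives `ct + d = Λ(1 - σs)` and `(at + b)/(ct + d) = γ + w` with
`w = s/(1 - σs)`. The left-hand side is therefore
`(1 - σs)⁻ᵐ f(γ + w) = ∑ₚ A p sᵖ (1 - σs)^-(m+p)`, and expanding each `(1 - σs)^-(m+p)` by the
negative binomial series gives a double series over `(p, k)`. Its norms form the same double series
over `ℝ` for `‖A p‖, ‖σ‖, ‖s‖`, which converges once `‖s‖/(1 - ‖σ‖‖s‖)` is below the radius of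
the Taylor series of `f` at `γ`; so it may be regrouped along the diagonals `p + k = j`.
-/

theorem summable_norm_mul_pow_of_summable {𝕜 : Type*} [NormedDivisionRing 𝕜] {a : ℕ → 𝕜} {z : 𝕜}
    (h : Summable fun n => a n * z ^ n) {ρ : ℝ} (hρ : 0 ≤ ρ) (hρz : ρ < ‖z‖) :
    Summable fun n => ‖a n‖ * ρ ^ n := by
  obtain ⟨C, hC⟩ := h.tendsto_atTop_zero.norm.bddAbove_range
  have hz : 0 < ‖z‖ := hρ.trans_lt hρz
  refine .of_nonneg_of_le (fun n => by positivity) (fun n => ?_)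
    ((summable_geometric_of_lt_one (div_nonneg hρ hz.le) ((div_lt_one hz).2 hρz)).mul_left C)
  calc ‖a n‖ * ρ ^ n = ‖a n * z ^ n‖ * (ρ / ‖z‖) ^ n := by
        rw [norm_mul, norm_pow, div_pow]; field_simp
    _ ≤ C * (ρ / ‖z‖) ^ n := by gcongr; exact hC (Set.mem_range_self n)

namespace Complex

variable {f : ℂ → ℂ} {c : ℂ} {r : ℝ}

theorem hasSum_taylorSeries_of_norm_lt (hf : DifferentiableOn ℂ f (Metric.ball c r)) {w : ℂ}
    (hw : ‖w‖ < r) : HasSum (fun n => iteratedDeriv n f c / (n ! : ℂ) * w ^ n) (f (c + w)) := by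
  have H := hasSum_taylorSeries_on_ball hf (z := c + w) (by simpa using hw)
  have hterm (n : ℕ) : (n ! : ℂ)⁻¹ * (w ^ n * iteratedDeriv n f c) =
      iteratedDeriv n f c / (n ! : ℂ) * w ^ n := by
    ring
  simpa only [add_sub_cancel_left, smul_eq_mul, hterm] using H

theorem summable_norm_taylorSeries (hf : DifferentiableOn ℂ f (Metric.ball c r)) {ρ : ℝ}
    (hρ : 0 ≤ ρ) (hρr : ρ < r) :
    Summable fun n => ‖iteratedDeriv n f c / (n ! : ℂ)‖ * ρ ^ n := by
  have hz : ‖(((ρ + r) / 2 : ℝ) : ℂ)‖ = (ρ + r) / 2 := by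
    rw [norm_real, Real.norm_of_nonneg (by linarith)]
  exact summable_norm_mul_pow_of_summable
    (hasSum_taylorSeries_of_norm_lt hf (by rw [hz]; linarith)).summable hρ (by rw [hz]; linarith)

end Complex

theorem HasSum.sum_antidiagonal {A M : Type*} [AddMonoid A] [HasAntidiagonal A]
    [AddCommMonoid M] [TopologicalSpace M] [ContinuousAdd M] [RegularSpace M]
    {G : A × A → M} {a : M}
    (h : HasSum G a) : HasSum (fun j => ∑ x ∈ antidiagonal j, G x) a := by
  refine (HasAntidiagonal.sigmaAntidiagonalEquivProd.hasSum_iff.2 h).sigma fun j => ?_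
  simpa only [Function.comp_def, HasAntidiagonal.sigmaAntidiagonalEquivProd_apply,
    sum_coe_sort] using hasSum_fintype fun x : antidiagonal j => G x

section Reexpansion

variable {𝕜 : Type*} [NormedField 𝕜]

theorem one_sub_ne_zero_of_norm_lt_one {x : 𝕜} (h : ‖x‖ < 1) : 1 - x ≠ 0 := by
  rw [sub_ne_zero]
  rintro rfl
  simp at h

theorem norm_div_one_sub_mul_le {σ s : 𝕜} (h : ‖σ‖ * ‖s‖ < 1) :
    ‖s / (1 - σ * s)‖ ≤ ‖s‖ / (1 - ‖σ‖ * ‖s‖) := by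
  have := norm_sub_norm_le (1 : 𝕜) (σ * s)
  rw [norm_one, norm_mul] at this
  rw [norm_div]
  exact div_le_div_of_nonneg_left (norm_nonneg s) (by linarith) this

theorem hasSum_choose_mul_pow_fiber (n p : ℕ) (a σ s : 𝕜) (h : ‖σ * s‖ < 1) :
    HasSum (fun k => ((n + (p + k)).choose k : 𝕜) * a * σ ^ k * s ^ (p + k))
      (a * (s / (1 - σ * s)) ^ p / (1 - σ * s) ^ (n + 1)) := by
  have hne := one_sub_ne_zero_of_norm_lt_one h
  have H := (hasSum_choose_mul_geometric_of_norm_lt_one (n + p) h).mul_left (a * s ^ p)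
  have hterm (k : ℕ) : ((n + (p + k)).choose k : 𝕜) * a * σ ^ k * s ^ (p + k) =
      a * s ^ p * ((k + (n + p)).choose (n + p) * (σ * s) ^ k) := by
    rw [show n + (p + k) = k + (n + p) by ring, choose_symm_add]
    ring
  have hsum : a * (s / (1 - σ * s)) ^ p / (1 - σ * s) ^ (n + 1) =
      a * s ^ p * (1 / (1 - σ * s) ^ (n + p + 1)) := by
    rw [div_pow, show n + p + 1 = p + (n + 1) by ring, pow_add]
    field_simp
    ring
  rw [hsum]
  simpa only [← hterm] using H

variable [CompleteSpace 𝕜]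

theorem hasSum_binomial_reexpansion (n : ℕ) {A : ℕ → 𝕜} {σ s F : 𝕜} (hσs : ‖σ‖ * ‖s‖ < 1)
    (hA : Summable fun p => ‖A p‖ * (‖s‖ / (1 - ‖σ‖ * ‖s‖)) ^ p)
    (hF : HasSum (fun p => A p * (s / (1 - σ * s)) ^ p) F) :
    HasSum (fun j => (∑ k ∈ range (j + 1), ((n + j).choose k : 𝕜) * A (j - k) * σ ^ k) * s ^ j)
      (F / (1 - σ * s) ^ (n + 1)) := by
  set G : ℕ × ℕ → 𝕜 := fun pk =>
    ((n + (pk.1 + pk.2)).choose pk.2 : 𝕜) * A pk.1 * σ ^ pk.2 * s ^ (pk.1 + pk.2)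
  set Gnorm : ℕ × ℕ → ℝ := fun pk =>
    ((n + (pk.1 + pk.2)).choose pk.2 : ℝ) * ‖A pk.1‖ * ‖σ‖ ^ pk.2 * ‖s‖ ^ (pk.1 + pk.2)
  have hGnorm : Summable Gnorm := by
    have hfiber p := hasSum_choose_mul_pow_fiber n p ‖A p‖ ‖σ‖ ‖s‖ (by
      rwa [Real.norm_of_nonneg (by positivity)])
    refine (summable_prod_of_nonneg fun _ => by positivity).2
      ⟨fun p => (hfiber p).summable, ?_⟩
    exact (hA.div_const _).congr fun p => (hfiber p).tsum_eq.symm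
  have hGle (pk : ℕ × ℕ) : ‖G pk‖ ≤ Gnorm pk := by
    simp only [G, Gnorm, norm_mul, norm_pow]
    gcongr
    simpa using Nat.norm_cast_le (α := 𝕜) _
  have hGsum : HasSum G (F / (1 - σ * s) ^ (n + 1)) := by
    have hfiber p := hasSum_choose_mul_pow_fiber n p (A p) σ s (by rwa [norm_mul])
    have hG' := (hGnorm.of_norm_bounded hGle).hasSum
    rwa [(hG'.prod_fiberwise hfiber).unique (hF.div_const _)] at hG'
  have hdiag (j : ℕ) : ∑ x ∈ antidiagonal j, G x =
      (∑ k ∈ range (j + 1), ((n + j).choose k : 𝕜) * A (j - k) * σ ^ k) * s ^ j := by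
    rw [sum_mul, ← Nat.sum_antidiagonal_eq_sum_range_succ
      (fun k p => ((n + j).choose k : 𝕜) * A p * σ ^ k * s ^ j), ← Nat.sum_antidiagonal_swap]
    refine sum_congr rfl fun x hx => ?_
    rw [HasAntidiagonal.mem_antidiagonal] at hx
    simp only [G, Prod.fst_swap, Prod.snd_swap]
    rw [add_comm x.2, hx]
  simpa only [hdiag] using hGsum.sum_antidiagonal

end Reexpansion

theorem mul_lt_one_and_div_one_sub_lt {x y r : ℝ} (hr : 0 < r) (hx : 0 ≤ x) (hy : 0 ≤ y)
    (h : x < r / (1 + r * y)) : y * x < 1 ∧ x / (1 - y * x) < r := by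
  have h' : x * (1 + r * y) < r := (lt_div_iff₀ (by positivity)).1 h
  have hyx : y * x < 1 := by nlinarith
  exact ⟨hyx, (div_lt_iff₀ (by linarith)).2 (by nlinarith)⟩

section Moebius

variable {K : Type*} [Field K] (a b c d τ s : K)

theorem moebius_denom_shift :
    c * (τ + (c * τ + d) ^ 2 * s) + d = (c * τ + d) * (1 - -c * (c * τ + d) * s) := by
  ring

theorem moebius_shift (hA : a * d - b * c = 1) (hτ : c * τ + d ≠ 0)
    (hs : 1 - -c * (c * τ + d) * s ≠ 0) :
    (a * (τ + (c * τ + d) ^ 2 * s) + b) / (c * (τ + (c * τ + d) ^ 2 * s) + d) =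
      (a * τ + b) / (c * τ + d) + s / (1 - -c * (c * τ + d) * s) := by
  have hΛs := mul_ne_zero hτ hs
  rw [moebius_denom_shift, div_add_div _ _ hτ hs, div_eq_div_iff hΛs hΛs]
  linear_combination (c * τ + d) ^ 2 * s * (1 - -c * (c * τ + d) * s) * hA

end Moebius

/-- Taylor expansion of `(ct+d)^{-m} f((at+b)/(ct+d))` in the shifted variable
`s` with `t = τ + (cτ+d)²s`: for `f` holomorphic near `γ = (aτ+b)/(cτ+d)` there is `ε > 0`
such that for `|s| < ε` one has `ct+d ≠ 0` and
`(ct+d)^{-m} f((at+b)/(ct+d)) = (cτ+d)^{-m} ∑_{j≥0} (∑_{p+k=j} C(m+j-1,k) (f⁽ᵖ⁾(γ)/p!) σᵏ) sʲ`,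
where `σ = -c(cτ+d)`, the series converging (absolutely) for `|s| < ε`. -/
theorem sl2_taylor_expansion (a b c d : ℂ) (hA : a * d - b * c = 1)
    (τ : ℂ) (hτ : c * τ + d ≠ 0) (m : ℕ) (hm : 1 ≤ m)
    (V : Set ℂ) (hV : IsOpen V) (f : ℂ → ℂ)
    (hγ : (a * τ + b) / (c * τ + d) ∈ V) (hf : DifferentiableOn ℂ f V) :
    ∃ ε > 0, ∀ s : ℂ, ‖s‖ < ε →
      c * (τ + (c * τ + d) ^ 2 * s) + d ≠ 0 ∧
      HasSum
        (fun j : ℕ =>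
          (∑ k ∈ Finset.range (j + 1),
            (Nat.choose (m + j - 1) k : ℂ) *
              (iteratedDeriv (j - k) f ((a * τ + b) / (c * τ + d)) /
                (Nat.factorial (j - k) : ℂ)) *
              (-c * (c * τ + d)) ^ k) * s ^ j)
        ((c * τ + d) ^ m *
          (f ((a * (τ + (c * τ + d) ^ 2 * s) + b) / (c * (τ + (c * τ + d) ^ 2 * s) + d)) /
            (c * (τ + (c * τ + d) ^ 2 * s) + d) ^ m)) := by
  obtain ⟨n, rfl⟩ := Nat.exists_eq_add_of_le' hm
  obtain ⟨r, hr, hball⟩ := Metric.isOpen_iff.mp hV _ hγ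
  have hfr := hf.mono hball
  set σ := -c * (c * τ + d)
  refine ⟨r / (1 + r * ‖σ‖), by positivity, fun s hs => ?_⟩
  obtain ⟨hσs, hradius⟩ := mul_lt_one_and_div_one_sub_lt hr (norm_nonneg s) (norm_nonneg σ) hs
  have hσs' : 1 - σ * s ≠ 0 := one_sub_ne_zero_of_norm_lt_one (by rwa [norm_mul])
  refine ⟨by rw [moebius_denom_shift]; exact mul_ne_zero hτ hσs', ?_⟩
  have H := hasSum_binomial_reexpansion n hσs
    (Complex.summable_norm_taylorSeries hfr (by positivity) hradius)
    (Complex.hasSum_taylorSeries_of_norm_lt hfr ((norm_div_one_sub_mul_le hσs).trans_lt hradius))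
  rw [moebius_shift a b c d τ s hA hτ hσs', moebius_denom_shift, mul_pow, ← mul_div_assoc,
    mul_div_mul_left _ _ (pow_ne_zero _ hτ)]
  simpa only [show ∀ j, n + 1 + j - 1 = n + j by omega] using H
end
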